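/- Let L > 0, let n be a natural number, and let ε ∈ (0, 1). Then there exist constants C > 0 and δ₀ ∈ (0, 1) such that for all δ ∈ (0, δ₀) and all x ∈ ℝ with |x| ≤ L/2 − δ^ε, one has |A_δ[y ↦ yⁿ](x) − xⁿ/2| ≤ C·δ^{1−ε}. -/

import Mathlib

/-!
With `K t = δ / (t ^ 2 + 4 δ ^ 2)` and `D = L / 2`, split
`A_δ[ψ](x) - ψ x / 2 = π⁻¹ ∫ K (x - y) (ψ y - ψ x) dy + ψ x (π⁻¹ ∫ K (x - y) dy - 1 / 2)`.
The kernel integrates to `arctan`, and `π / 2 - arctan u ≤ 1 / u` bounds the mass missing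
from `(-D, D)` by `δ / (D - x) + δ / (D + x) ≤ 2 δ ^ (1 - ε)`. For the first term, `yⁿ` is
Lipschitz on `[-D, D]` and `K t |t| ≤ δ ^ (1 - ε) |t| ^ (ε - 1)`, because
`δ ^ ε |t| ^ (2 - ε) ≤ max δ |t| ^ 2 ≤ t ^ 2 + 4 δ ^ 2`; the right side is integrable as `ε > 0`.
-/

open MeasureTheory Real intervalIntegral Set Interval

namespace Real

lemma arctan_le_self {x : ℝ} (hx : 0 ≤ x) : arctan x ≤ x := by
  simpa only [tan_arctan] using le_tan (arctan_nonneg.2 hx) (arctan_lt_pi_div_two x)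

lemma pi_div_two_sub_arctan_le_inv {x : ℝ} (hx : 0 < x) : π / 2 - arctan x ≤ x⁻¹ := by
  rw [← arctan_inv_of_pos hx]
  exact arctan_le_self (inv_nonneg.2 hx.le)

end Real

lemma intervalIntegrable_abs_rpow {r : ℝ} (hr : -1 < r) (a b : ℝ) :
    IntervalIntegrable (fun t : ℝ ↦ |t| ^ r) volume a b := by
  have h_nonneg : ∀ c, 0 ≤ c → IntervalIntegrable (fun t : ℝ ↦ |t| ^ r) volume 0 c := by
    intro c hc
    refine (intervalIntegrable_rpow' hr).congr fun t ht ↦ ?_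
    rw [uIoc_of_le hc] at ht
    simp only [abs_of_pos ht.1]
  have h_zero : ∀ c, IntervalIntegrable (fun t : ℝ ↦ |t| ^ r) volume 0 c := by
    intro c
    rcases le_total 0 c with hc | hc
    · exact h_nonneg c hc
    · simpa only [abs_neg, neg_neg, neg_zero] using
        (IntervalIntegrable.iff_comp_neg).mp (h_nonneg (-c) (neg_nonneg.2 hc))
  exact (h_zero a).symm.trans (h_zero b)

lemma integral_abs_rpow_sub_one_of_nonneg {s b : ℝ} (hs : 0 < s) (hb : 0 ≤ b) :
    ∫ t in (0 : ℝ)..b, |t| ^ (s - 1) = b ^ s / s := by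
  rw [integral_congr (g := fun t : ℝ ↦ t ^ (s - 1)) fun t ht ↦ by
      rw [uIcc_of_le hb] at ht; simp only [abs_of_nonneg ht.1],
    integral_rpow (Or.inl (by linarith)), sub_add_cancel, zero_rpow hs.ne', sub_zero]

lemma integral_abs_rpow_sub_one {s a b : ℝ} (hs : 0 < s) (ha : a ≤ 0) (hb : 0 ≤ b) :
    ∫ t in a..b, |t| ^ (s - 1) = ((-a) ^ s + b ^ s) / s := by
  have hint := intervalIntegrable_abs_rpow (r := s - 1) (by linarith)
  have h_neg : ∫ t in a..0, |t| ^ (s - 1) = (-a) ^ s / s := by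
    rw [← integral_abs_rpow_sub_one_of_nonneg hs (neg_nonneg.2 ha), ← neg_zero,
      ← integral_comp_neg]
    simp only [abs_neg, neg_zero]
  rw [← integral_add_adjacent_intervals (hint a 0) (hint 0 b), h_neg,
    integral_abs_rpow_sub_one_of_nonneg hs hb, add_div]

lemma abs_pow_sub_pow_le_of_abs_le {α : Type*} [CommRing α] [LinearOrder α] [IsOrderedRing α]
    {x y D : α} (n : ℕ) (hx : |x| ≤ D) (hy : |y| ≤ D) :
    |y ^ n - x ^ n| ≤ n * D ^ (n - 1) * |y - x| := by
  calc |y ^ n - x ^ n| ≤ |y - x| * n * max |y| |x| ^ (n - 1) := abs_pow_sub_pow_le y x n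
    _ ≤ |y - x| * n * D ^ (n - 1) := by gcongr; exact max_le hy hx
    _ = n * D ^ (n - 1) * |y - x| := by ring

/-- `A_δ[ψ](x) = π⁻¹ ∫ y in -(L/2)..L/2, cauchyKernel δ (x - y) * ψ y`. -/
noncomputable def cauchyKernel (δ t : ℝ) : ℝ := δ / (t ^ 2 + 4 * δ ^ 2)

namespace cauchyKernel

variable {δ : ℝ}

lemma nonneg (hδ : 0 ≤ δ) (t : ℝ) : 0 ≤ cauchyKernel δ t := by
  unfold cauchyKernel; positivity

lemma continuous (hδ : 0 < δ) : Continuous (cauchyKernel δ) :=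
  continuous_const.div (by fun_prop) fun t ↦ by positivity

lemma integral_eq (hδ : 0 < δ) (a b : ℝ) :
    ∫ t in a..b, cauchyKernel δ t = (arctan (b / (2 * δ)) - arctan (a / (2 * δ))) / 2 := by
  rw [integral_eq_sub_of_hasDerivAt (f := fun t ↦ arctan (t / (2 * δ)) / 2) (fun t _ ↦ ?_)
    ((continuous hδ).intervalIntegrable a b), sub_div]
  refine (((hasDerivAt_id' t).div_const (2 * δ)).arctan.div_const 2).congr_deriv ?_
  unfold cauchyKernel
  field_simp
  ring

lemma abs_integral_sub_pi_div_two_le (hδ : 0 < δ) {a b : ℝ} (ha : 0 < a) (hb : 0 < b) :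
    |(∫ t in (-a)..b, cauchyKernel δ t) - π / 2| ≤ δ / a + δ / b := by
  have tail : ∀ c > 0, π / 2 - arctan (c / (2 * δ)) ≤ 2 * (δ / c) := fun c hc ↦ by
    simpa [div_div_eq_mul_div, mul_div_assoc] using
      pi_div_two_sub_arctan_le_inv (div_pos hc (mul_pos two_pos hδ))
  rw [integral_eq hδ, neg_div, arctan_neg, abs_le]
  constructor <;> linarith [tail a ha, tail b hb, arctan_lt_pi_div_two (a / (2 * δ)),
    arctan_lt_pi_div_two (b / (2 * δ))]

lemma mul_abs_le (hδ : 0 < δ) {ε : ℝ} (hε₀ : 0 ≤ ε) (hε₂ : ε ≤ 2) (t : ℝ) :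
    cauchyKernel δ t * |t| ≤ δ ^ (1 - ε) * |t| ^ (ε - 1) := by
  rcases eq_or_ne t 0 with rfl | ht
  · simp only [abs_zero, mul_zero]; positivity
  have ht' : 0 < |t| := abs_pos.2 ht
  obtain ⟨m, hδm, htm, hm⟩ : ∃ m, δ ≤ m ∧ |t| ≤ m ∧ m ^ 2 ≤ t ^ 2 + 4 * δ ^ 2 := by
    refine ⟨max δ |t|, le_max_left _ _, le_max_right _ _, ?_⟩
    rcases max_choice δ |t| with h | h <;> rw [h] <;> nlinarith [sq_abs t]
  have key : δ ^ ε * |t| ^ (2 - ε) ≤ t ^ 2 + 4 * δ ^ 2 := calc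
    δ ^ ε * |t| ^ (2 - ε) ≤ m ^ ε * m ^ (2 - ε) := by
      have : 0 ≤ 2 - ε := sub_nonneg.2 hε₂
      gcongr
      exact rpow_nonneg (hδ.le.trans hδm) _
    _ = m ^ 2 := by rw [← rpow_add (hδ.trans_le hδm), add_sub_cancel, rpow_two]
    _ ≤ t ^ 2 + 4 * δ ^ 2 := hm
  have split : δ * |t| = δ ^ (1 - ε) * |t| ^ (ε - 1) * (δ ^ ε * |t| ^ (2 - ε)) := by
    rw [mul_mul_mul_comm, ← rpow_add hδ, ← rpow_add ht']
    norm_num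
  unfold cauchyKernel
  rw [div_mul_eq_mul_div, div_le_iff₀ (by positivity), split]
  gcongr

end cauchyKernel

section Estimates

variable {ψ : ℝ → ℝ} {δ ε D M x : ℝ}

lemma abs_integral_cauchyKernel_mul_sub_le (hδ : 0 < δ) (hε₀ : 0 < ε) (hε₂ : ε ≤ 2)
    (hx : |x| ≤ D) (hM : 0 ≤ M) (hψ : ∀ y ∈ Icc (-D) D, |ψ y - ψ x| ≤ M * |y - x|) :
    |∫ y in (-D)..D, cauchyKernel δ (x - y) * (ψ y - ψ x)|
      ≤ M * δ ^ (1 - ε) * (((D - x) ^ ε + (D + x) ^ ε) / ε) := by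
  obtain ⟨hxl, hxr⟩ := abs_le.1 hx
  have hint : IntervalIntegrable (fun y ↦ |x - y| ^ (ε - 1)) volume (-D) D := by
    have := (intervalIntegrable_abs_rpow (r := ε - 1) (by linarith) (x + D) (x - D)).comp_sub_left
      x
    rwa [sub_add_cancel_left, sub_sub_cancel] at this
  have hval : ∫ y in (-D)..D, |x - y| ^ (ε - 1) = ((D - x) ^ ε + (D + x) ^ ε) / ε := by
    rw [integral_comp_sub_left (fun t ↦ |t| ^ (ε - 1)) x,
      integral_abs_rpow_sub_one hε₀ (by linarith) (by linarith), neg_sub, sub_neg_eq_add,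
      add_comm x]
  have hbound : ∀ᵐ y ∂volume.restrict (Ι (-D) D),
      ‖cauchyKernel δ (x - y) * (ψ y - ψ x)‖ ≤ M * δ ^ (1 - ε) * |x - y| ^ (ε - 1) := by
    filter_upwards [ae_restrict_mem measurableSet_uIoc] with y hy
    rw [uIoc_of_le (by linarith)] at hy
    calc ‖cauchyKernel δ (x - y) * (ψ y - ψ x)‖
        = cauchyKernel δ (x - y) * |ψ y - ψ x| := by
          rw [norm_mul, Real.norm_of_nonneg (cauchyKernel.nonneg hδ.le _), Real.norm_eq_abs]
      _ ≤ cauchyKernel δ (x - y) * (M * |x - y|) := by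
          gcongr
          · exact cauchyKernel.nonneg hδ.le _
          · rw [abs_sub_comm x y]; exact hψ y (Ioc_subset_Icc_self hy)
      _ = M * (cauchyKernel δ (x - y) * |x - y|) := by ring
      _ ≤ M * (δ ^ (1 - ε) * |x - y| ^ (ε - 1)) :=
          mul_le_mul_of_nonneg_left (cauchyKernel.mul_abs_le hδ hε₀.le hε₂ _) hM
      _ = M * δ ^ (1 - ε) * |x - y| ^ (ε - 1) := by ring
  have hnonneg : 0 ≤ M * δ ^ (1 - ε) * (((D - x) ^ ε + (D + x) ^ ε) / ε) := by
    have h₁ := rpow_nonneg (sub_nonneg.2 hxr) ε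
    have h₂ := rpow_nonneg (neg_le_iff_add_nonneg'.1 hxl) ε
    exact mul_nonneg (by positivity) (div_nonneg (add_nonneg h₁ h₂) hε₀.le)
  calc |∫ y in (-D)..D, cauchyKernel δ (x - y) * (ψ y - ψ x)|
      ≤ |∫ y in (-D)..D, M * δ ^ (1 - ε) * |x - y| ^ (ε - 1)| :=
        norm_integral_le_abs_of_norm_le hbound (hint.const_mul (M * δ ^ (1 - ε)))
    _ = M * δ ^ (1 - ε) * (((D - x) ^ ε + (D + x) ^ ε) / ε) := by
        rw [intervalIntegral.integral_const_mul, hval, abs_of_nonneg hnonneg]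

theorem abs_integral_cauchyKernel_mul_sub_half_le (hδ : 0 < δ) (hε₀ : 0 < ε) (hε₂ : ε ≤ 2)
    (hxl : -D < x) (hxr : x < D) (hψi : IntervalIntegrable ψ volume (-D) D) (hM : 0 ≤ M)
    (hψ : ∀ y ∈ Icc (-D) D, |ψ y - ψ x| ≤ M * |y - x|) :
    |(1 / π) * (∫ y in (-D)..D, cauchyKernel δ (x - y) * ψ y) - ψ x / 2|
      ≤ (M * δ ^ (1 - ε) * (((D - x) ^ ε + (D + x) ^ ε) / ε)
          + |ψ x| * (δ / (D - x) + δ / (D + x))) / π := by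
  have hK : Continuous fun y ↦ cauchyKernel δ (x - y) :=
    (cauchyKernel.continuous hδ).comp (continuous_const.sub continuous_id)
  have hsplit : ∫ y in (-D)..D, cauchyKernel δ (x - y) * (ψ y - ψ x)
      = (∫ y in (-D)..D, cauchyKernel δ (x - y) * ψ y)
        - ψ x * ∫ y in (-D)..D, cauchyKernel δ (x - y) := by
    simp_rw [mul_sub]
    rw [integral_sub (hψi.continuousOn_mul hK.continuousOn)
      ((hK.intervalIntegrable _ _).mul_const _), intervalIntegral.integral_mul_const, mul_comm]
  have hmass : ∫ y in (-D)..D, cauchyKernel δ (x - y)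
      = ∫ t in (-(D - x))..(D + x), cauchyKernel δ t := by
    rw [integral_comp_sub_left (cauchyKernel δ) x, neg_sub, sub_neg_eq_add, add_comm x]
  have hT := abs_integral_cauchyKernel_mul_sub_le hδ hε₀ hε₂ (abs_le.2 ⟨hxl.le, hxr.le⟩) hM hψ
  have hI :=
    cauchyKernel.abs_integral_sub_pi_div_two_le hδ (sub_pos.2 hxr) (neg_lt_iff_pos_add'.1 hxl)
  rw [← hmass] at hI
  rw [show (1 / π) * (∫ y in (-D)..D, cauchyKernel δ (x - y) * ψ y) - ψ x / 2
      = ((∫ y in (-D)..D, cauchyKernel δ (x - y) * (ψ y - ψ x))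
        + ψ x * ((∫ y in (-D)..D, cauchyKernel δ (x - y)) - π / 2)) / π by
    rw [hsplit]; field_simp; ring,
    abs_div, abs_of_pos pi_pos]
  gcongr
  exact (abs_add_le _ _).trans (by rw [abs_mul]; gcongr)

end Estimates

lemma div_le_rpow_one_sub {δ ε d : ℝ} (hδ : 0 < δ) (hd : δ ^ ε ≤ d) : δ / d ≤ δ ^ (1 - ε) := by
  calc δ / d ≤ δ / δ ^ ε := div_le_div_of_nonneg_left hδ.le (rpow_pos_of_pos hδ ε) hd
    _ = δ ^ (1 - ε) := by rw [rpow_sub hδ, rpow_one]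

/-- For `L > 0`, `n : ℕ` and `ε ∈ (0,1)`, there are `C > 0` and `δ₀ ∈ (0,1)` such that for all
`δ ∈ (0, δ₀)` and all real `x` with `|x| ≤ L/2 − δ^ε`,
`|A_δ[y ↦ yⁿ](x) − xⁿ/2| ≤ C·δ^{1−ε}`. -/
theorem adelta_pow_rate_near_ends (L : ℝ) (hL : 0 < L) (n : ℕ) (ε : ℝ)
    (hε : ε ∈ Set.Ioo (0:ℝ) 1) :
    ∃ C > (0:ℝ), ∃ δ₀ ∈ Set.Ioo (0:ℝ) 1, ∀ δ ∈ Set.Ioo (0:ℝ) δ₀, ∀ x : ℝ,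
      |x| ≤ L/2 - δ ^ ε →
      |(1/Real.pi) * (∫ y in (-(L/2))..(L/2), δ/((x - y)^2 + 4*δ^2) * y^n) - x^n/2|
        ≤ C * δ ^ (1 - ε) := by
  obtain ⟨hε₀, hε₁⟩ := hε
  refine ⟨(2 * (n * (L / 2) ^ (n - 1)) * L ^ ε / ε + 2 * (L / 2) ^ n) / π, by positivity,
    1 / 2, by norm_num, ?_⟩
  rintro δ ⟨hδ, -⟩ x hx
  have hδε := rpow_pos_of_pos hδ ε
  obtain ⟨hxl, hxr⟩ := abs_le.1 hx
  have hxD : |x| ≤ L / 2 := hx.trans (by linarith)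
  calc _ ≤ (n * (L / 2) ^ (n - 1) * δ ^ (1 - ε) * (((L / 2 - x) ^ ε + (L / 2 + x) ^ ε) / ε)
          + |x ^ n| * (δ / (L / 2 - x) + δ / (L / 2 + x))) / π :=
        abs_integral_cauchyKernel_mul_sub_half_le (ψ := fun y ↦ y ^ n) hδ hε₀ (by linarith)
          (by linarith) (by linarith) ((continuous_pow n).intervalIntegrable _ _) (by positivity)
          fun y hy ↦ abs_pow_sub_pow_le_of_abs_le n hxD (abs_le.2 hy)
    _ ≤ (n * (L / 2) ^ (n - 1) * δ ^ (1 - ε) * ((L ^ ε + L ^ ε) / ε)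
          + (L / 2) ^ n * (δ ^ (1 - ε) + δ ^ (1 - ε))) / π := by
        have h₁ : δ ^ ε ≤ L / 2 - x := by linarith
        have h₂ : δ ^ ε ≤ L / 2 + x := by linarith
        gcongr
        any_goals linarith
        · exact add_nonneg (div_nonneg hδ.le (by linarith)) (div_nonneg hδ.le (by linarith))
        · rw [abs_pow]; exact pow_le_pow_left₀ (abs_nonneg x) hxD n
        · exact div_le_rpow_one_sub hδ h₁
        · exact div_le_rpow_one_sub hδ h₂
    _ = _ := by ring
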